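/- Domain-selection gap lower bound (cross-entropy form, Theorem 1 of the paper). Let X_j : Ω → 𝒳_j for j ∈ Fin D be a family of random variables into finite types, Y : Ω → Bool, and W : Ω → ∏_{j ∈ Fin D} 𝒳_j the joint random variable defined by (W ω) j = X_j ω. Let S ⊆ Fin D be nonempty and suppose Z : Ω → 𝒵 (𝒵 finite) satisfies: for every j ∈ S there is a function g_j : 𝒳_j → 𝒵 with Z ω = g_j (X_j ω) for all ω ∈ Ω. Suppose i ∈ Fin D satisfies the optimality assumption I(X_i ; Y) = max_{j ∈ Fin D} I(X_j ; Y). Then (⨅ over all h : 𝒵 → ℝ with 0 < h(z) < 1 for all z of ∑_ω P ω · ℓ_CE(h(Z ω), Y ω)) − (⨅ over all h' : (∏_{j} 𝒳_j) → ℝ with 0 < h'(w) < 1 for all w of ∑_ω P ω · ℓ_CE(h'(W ω), Y ω)) ≥ I(X_i ; Y) − min_{j ∈ S} I(X_j ; Y). -/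

import Mathlib

open Finset

/-- Joint probability `p_{X,Y}(x,y) = ∑_{ω : X ω = x ∧ Y ω = y} P ω`. -/
noncomputable def pJoint {Ω 𝒳 : Type*} [Fintype Ω] [DecidableEq 𝒳]
    (P : Ω → ℝ) (X : Ω → 𝒳) (Y : Ω → Bool) (x : 𝒳) (y : Bool) : ℝ :=
  ∑ ω ∈ Finset.univ.filter (fun ω => X ω = x ∧ Y ω = y), P ω

/-- Marginal probability `p_X(x) = ∑_{ω : X ω = x} P ω`. -/
noncomputable def pMarg {Ω 𝒳 : Type*} [Fintype Ω] [DecidableEq 𝒳]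
    (P : Ω → ℝ) (X : Ω → 𝒳) (x : 𝒳) : ℝ :=
  ∑ ω ∈ Finset.univ.filter (fun ω => X ω = x), P ω

/-- Conditional entropy `H(Y|X)`; terms with `p_{X,Y}(x,y) = 0` vanish since `0 · log _ = 0`. -/
noncomputable def condEnt {Ω 𝒳 : Type*} [Fintype Ω] [Fintype 𝒳] [DecidableEq 𝒳]
    (P : Ω → ℝ) (X : Ω → 𝒳) (Y : Ω → Bool) : ℝ :=
  -∑ x : 𝒳, ∑ y : Bool, pJoint P X Y x y * Real.log (pJoint P X Y x y / pMarg P X x)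

/-- Entropy `H(Y)` of a binary random variable; `0 · log 0 = 0` is automatic. -/
noncomputable def ent {Ω : Type*} [Fintype Ω] (P : Ω → ℝ) (Y : Ω → Bool) : ℝ :=
  -∑ y : Bool, pMarg P Y y * Real.log (pMarg P Y y)

/-- Mutual information `I(X;Y) = H(Y) − H(Y|X)`. -/
noncomputable def mutInfo {Ω 𝒳 : Type*} [Fintype Ω] [Fintype 𝒳] [DecidableEq 𝒳]
    (P : Ω → ℝ) (X : Ω → 𝒳) (Y : Ω → Bool) : ℝ :=
  ent P Y - condEnt P X Y

/-- Binary cross-entropy loss. -/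
noncomputable def ceLoss (q : ℝ) (y : Bool) : ℝ :=
  if y then -Real.log q else -Real.log (1 - q)

/-- Expected cross-entropy risk of predictor `f`. -/
noncomputable def risk {Ω 𝒳 : Type*} [Fintype Ω]
    (P : Ω → ℝ) (X : Ω → 𝒳) (Y : Ω → Bool) (f : 𝒳 → ℝ) : ℝ :=
  ∑ ω, P ω * ceLoss (f (X ω)) (Y ω)

/-! For any features `V`, the best cross-entropy risk over predictors `V → (0,1)` is `H(Y|V)`:
Gibbs' inequality bounds every risk below by `H(Y|V)`, and smoothing the Bayes predictor
`x ↦ P(Y = true | V = x)` towards `1/2` comes arbitrarily close to it. Coarsening the features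
can only raise the best risk, and `Z` factors through `X j` for a `j ∈ S` of least information
while `X i` factors through `W`; hence `inf R(h ∘ Z) ≥ H(Y | X j)` and
`inf R(h' ∘ W) ≤ H(Y | X i)`, and the difference of conditional entropies is
`I(X i ; Y) - I(X j ; Y)`. -/

open Real

noncomputable def binCrossEntropy (p q : ℝ) : ℝ :=
  p * ceLoss q true + (1 - p) * ceLoss q false

lemma ceLoss_nonneg {q : ℝ} (hq : 0 < q ∧ q < 1) (y : Bool) : 0 ≤ ceLoss q y := by
  cases y
  · simpa [ceLoss] using log_nonpos (by linarith) (by linarith)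
  · simpa [ceLoss] using log_nonpos hq.1.le hq.2.le

lemma mul_neg_log_le_mul_neg_log_add {p q : ℝ} (hp : 0 ≤ p) (hq : 0 < q) :
    p * -log p ≤ p * -log q + (q - p) := by
  rcases hp.eq_or_lt with rfl | hp
  · simpa using hq.le
  have h := mul_le_mul_of_nonneg_left (log_le_sub_one_of_pos (div_pos hq hp)) hp.le
  have hlin : p * (q / p - 1) = q - p := by field_simp
  rw [log_div hq.ne' hp.ne', hlin] at h
  linarith

lemma mul_neg_log_le_of_mul_le {p q t : ℝ} (hp : 0 ≤ p) (ht : 0 < t) (htp : t * p ≤ q) :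
    p * -log q ≤ p * -log p - p * log t := by
  rcases hp.eq_or_lt with rfl | hp
  · simp
  have h := log_le_log (by positivity) htp
  rw [log_mul ht.ne' hp.ne'] at h
  nlinarith

theorem binCrossEntropy_self_le {p q : ℝ} (hp : 0 ≤ p ∧ p ≤ 1) (hq : 0 < q ∧ q < 1) :
    binCrossEntropy p p ≤ binCrossEntropy p q := by
  have htrue := mul_neg_log_le_mul_neg_log_add hp.1 hq.1
  have hfalse := mul_neg_log_le_mul_neg_log_add (sub_nonneg.2 hp.2) (sub_pos.2 hq.2)
  simp only [binCrossEntropy, ceLoss, if_true, Bool.false_eq_true, if_false]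
  linarith

lemma smooth_mem_Ioo {p δ : ℝ} (hp : 0 ≤ p ∧ p ≤ 1) (hδ : 0 < δ ∧ δ < 1) :
    0 < (1 - δ) * p + δ / 2 ∧ (1 - δ) * p + δ / 2 < 1 := by
  constructor <;> nlinarith

/-- Both the smoothed prediction and its complement stay above `1 - δ` times their targets
`p` and `1 - p`. -/
theorem binCrossEntropy_smooth_le {p δ : ℝ} (hp : 0 ≤ p ∧ p ≤ 1) (hδ : 0 < δ ∧ δ < 1) :
    binCrossEntropy p ((1 - δ) * p + δ / 2) ≤ binCrossEntropy p p - log (1 - δ) := by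
  have ht : 0 < 1 - δ := sub_pos.2 hδ.2
  have htrue := mul_neg_log_le_of_mul_le hp.1 ht
    (by nlinarith : (1 - δ) * p ≤ (1 - δ) * p + δ / 2)
  have hfalse := mul_neg_log_le_of_mul_le (sub_nonneg.2 hp.2) ht
    (by nlinarith : (1 - δ) * (1 - p) ≤ 1 - ((1 - δ) * p + δ / 2))
  simp only [binCrossEntropy, ceLoss, if_true, Bool.false_eq_true, if_false]
  linarith

section Risk

variable {Ω 𝒳 : Type*} [Fintype Ω] [DecidableEq 𝒳]

/-- `P(Y = true | X = x)`, with the junk value `0` where `P(X = x) = 0`. -/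
noncomputable def condProb (P : Ω → ℝ) (X : Ω → 𝒳) (Y : Ω → Bool) (x : 𝒳) : ℝ :=
  pJoint P X Y x true / pMarg P X x

lemma pJoint_nonneg {P : Ω → ℝ} (hP0 : ∀ ω, 0 ≤ P ω) (X : Ω → 𝒳) (Y : Ω → Bool)
    (x : 𝒳) (y : Bool) : 0 ≤ pJoint P X Y x y :=
  sum_nonneg fun ω _ => hP0 ω

lemma pMarg_nonneg {P : Ω → ℝ} (hP0 : ∀ ω, 0 ≤ P ω) (X : Ω → 𝒳) (x : 𝒳) :
    0 ≤ pMarg P X x :=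
  sum_nonneg fun ω _ => hP0 ω

lemma pMarg_eq_pJoint_add (P : Ω → ℝ) (X : Ω → 𝒳) (Y : Ω → Bool) (x : 𝒳) :
    pMarg P X x = pJoint P X Y x true + pJoint P X Y x false := by
  unfold pMarg pJoint
  rw [← sum_filter_add_sum_filter_not _ (fun ω => Y ω = true), filter_filter, filter_filter]
  congr 2
  ext ω
  cases Y ω <;> simp

lemma pJoint_true_eq {P : Ω → ℝ} (hP0 : ∀ ω, 0 ≤ P ω) (X : Ω → 𝒳) (Y : Ω → Bool)
    (x : 𝒳) :
    pJoint P X Y x true = pMarg P X x * condProb P X Y x := by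
  have hsum := pMarg_eq_pJoint_add P X Y x
  have htrue := pJoint_nonneg hP0 X Y x true
  have hfalse := pJoint_nonneg hP0 X Y x false
  rcases eq_or_ne (pMarg P X x) 0 with h | h
  · rw [h, zero_mul]; linarith
  · rw [condProb, mul_div_cancel₀ _ h]

lemma pJoint_false_eq {P : Ω → ℝ} (hP0 : ∀ ω, 0 ≤ P ω) (X : Ω → 𝒳) (Y : Ω → Bool)
    (x : 𝒳) :
    pJoint P X Y x false = pMarg P X x * (1 - condProb P X Y x) := by
  linear_combination -pMarg_eq_pJoint_add P X Y x - pJoint_true_eq hP0 X Y x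

lemma condProb_mem_Icc {P : Ω → ℝ} (hP0 : ∀ ω, 0 ≤ P ω) (X : Ω → 𝒳) (Y : Ω → Bool)
    (x : 𝒳) :
    0 ≤ condProb P X Y x ∧ condProb P X Y x ≤ 1 := by
  have hsum := pMarg_eq_pJoint_add P X Y x
  have htrue := pJoint_nonneg hP0 X Y x true
  have hfalse := pJoint_nonneg hP0 X Y x false
  exact ⟨div_nonneg htrue (by linarith), div_le_one_of_le₀ (by linarith) (by linarith)⟩

lemma risk_eq_sum_pJoint [Fintype 𝒳] (P : Ω → ℝ) (X : Ω → 𝒳) (Y : Ω → Bool)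
    (f : 𝒳 → ℝ) :
    risk P X Y f = ∑ x, ∑ y, pJoint P X Y x y * ceLoss (f x) y := by
  rw [risk, ← sum_fiberwise univ (fun ω => (X ω, Y ω)), Fintype.sum_prod_type]
  refine sum_congr rfl fun x _ => sum_congr rfl fun y _ => ?_
  rw [pJoint, sum_mul]
  refine sum_congr (filter_congr fun ω _ => Prod.ext_iff) fun ω hω => ?_
  obtain ⟨hx, hy⟩ := (mem_filter.1 hω).2
  rw [hx, hy]

lemma risk_eq_sum_binCrossEntropy [Fintype 𝒳] {P : Ω → ℝ} (hP0 : ∀ ω, 0 ≤ P ω)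
    (X : Ω → 𝒳) (Y : Ω → Bool) (f : 𝒳 → ℝ) :
    risk P X Y f = ∑ x, pMarg P X x * binCrossEntropy (condProb P X Y x) (f x) := by
  rw [risk_eq_sum_pJoint]
  refine sum_congr rfl fun x _ => ?_
  rw [Fintype.sum_bool, pJoint_true_eq hP0, pJoint_false_eq hP0, binCrossEntropy]
  ring

lemma condEnt_eq_sum_binCrossEntropy [Fintype 𝒳] {P : Ω → ℝ} (hP0 : ∀ ω, 0 ≤ P ω)
    (X : Ω → 𝒳) (Y : Ω → Bool) :
    condEnt P X Y =
      ∑ x, pMarg P X x * binCrossEntropy (condProb P X Y x) (condProb P X Y x) := by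
  rw [condEnt, ← sum_neg_distrib]
  refine sum_congr rfl fun x _ => ?_
  have htrue := pJoint_true_eq hP0 X Y x
  have hfalse := pJoint_false_eq hP0 X Y x
  rcases eq_or_ne (pMarg P X x) 0 with h | h
  · simp [h]
  have hdiv : pJoint P X Y x false / pMarg P X x = 1 - condProb P X Y x := by
    rw [hfalse, mul_div_cancel_left₀ _ h]
  rw [Fintype.sum_bool, hdiv, ← condProb, htrue, hfalse, binCrossEntropy, ceLoss,
    ceLoss]
  simp only [if_true, Bool.false_eq_true, if_false]
  ring

end Risk

instance (α : Type*) : Nonempty {h : α → ℝ // ∀ a, 0 < h a ∧ h a < 1} :=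
  ⟨⟨fun _ => 1 / 2, fun _ => by norm_num⟩⟩

section BestRisk

variable {Ω 𝒳 𝒲 : Type*} [Fintype Ω]

noncomputable def bestRisk (P : Ω → ℝ) (X : Ω → 𝒳) (Y : Ω → Bool) : ℝ :=
  ⨅ h : {h : 𝒳 → ℝ // ∀ x, 0 < h x ∧ h x < 1}, risk P X Y h.1

lemma risk_nonneg {P : Ω → ℝ} (hP0 : ∀ ω, 0 ≤ P ω) (X : Ω → 𝒳) (Y : Ω → Bool)
    {f : 𝒳 → ℝ} (hf : ∀ x, 0 < f x ∧ f x < 1) : 0 ≤ risk P X Y f :=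
  sum_nonneg fun ω _ => mul_nonneg (hP0 ω) (ceLoss_nonneg (hf (X ω)) (Y ω))

lemma bestRisk_le_risk {P : Ω → ℝ} (hP0 : ∀ ω, 0 ≤ P ω) (X : Ω → 𝒳) (Y : Ω → Bool)
    {f : 𝒳 → ℝ} (hf : ∀ x, 0 < f x ∧ f x < 1) : bestRisk P X Y ≤ risk P X Y f :=
  ciInf_le (f := fun h : {h : 𝒳 → ℝ // ∀ x, 0 < h x ∧ h x < 1} => risk P X Y h.1)
    ⟨0, Set.forall_mem_range.2 fun h => risk_nonneg hP0 X Y h.2⟩ ⟨f, hf⟩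

theorem bestRisk_le_bestRisk_of_comp {P : Ω → ℝ} (hP0 : ∀ ω, 0 ≤ P ω) {W : Ω → 𝒲}
    {X : Ω → 𝒳} (Y : Ω → Bool) (g : 𝒲 → 𝒳) (hX : ∀ ω, X ω = g (W ω)) :
    bestRisk P W Y ≤ bestRisk P X Y := by
  obtain rfl : X = g ∘ W := funext hX
  exact le_ciInf fun h => bestRisk_le_risk hP0 W Y fun w => h.2 (g w)

variable [Fintype 𝒳] [DecidableEq 𝒳]

lemma condEnt_le_risk {P : Ω → ℝ} (hP0 : ∀ ω, 0 ≤ P ω) (X : Ω → 𝒳) (Y : Ω → Bool)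
    {f : 𝒳 → ℝ} (hf : ∀ x, 0 < f x ∧ f x < 1) : condEnt P X Y ≤ risk P X Y f := by
  rw [condEnt_eq_sum_binCrossEntropy hP0, risk_eq_sum_binCrossEntropy hP0]
  exact sum_le_sum fun x _ => mul_le_mul_of_nonneg_left
    (binCrossEntropy_self_le (condProb_mem_Icc hP0 X Y x) (hf x)) (pMarg_nonneg hP0 X x)

lemma risk_smooth_le {P : Ω → ℝ} (hP0 : ∀ ω, 0 ≤ P ω) (hP1 : ∑ ω, P ω = 1)
    (X : Ω → 𝒳) (Y : Ω → Bool) {δ : ℝ} (hδ : 0 < δ ∧ δ < 1) :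
    risk P X Y (fun x => (1 - δ) * condProb P X Y x + δ / 2) ≤
      condEnt P X Y - log (1 - δ) := by
  have hmarg : ∑ x, pMarg P X x = 1 := (sum_fiberwise univ X P).trans hP1
  rw [condEnt_eq_sum_binCrossEntropy hP0, risk_eq_sum_binCrossEntropy hP0]
  calc _ ≤ ∑ x, pMarg P X x *
          (binCrossEntropy (condProb P X Y x) (condProb P X Y x) - log (1 - δ)) :=
        sum_le_sum fun x _ => mul_le_mul_of_nonneg_left
          (binCrossEntropy_smooth_le (condProb_mem_Icc hP0 X Y x) hδ) (pMarg_nonneg hP0 X x)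
    _ = _ := by simp only [mul_sub, sum_sub_distrib, ← sum_mul, hmarg, one_mul]

lemma bestRisk_le_condEnt_sub_log {P : Ω → ℝ} (hP0 : ∀ ω, 0 ≤ P ω) (hP1 : ∑ ω, P ω = 1)
    (X : Ω → 𝒳) (Y : Ω → Bool) {δ : ℝ} (hδ : 0 < δ ∧ δ < 1) :
    bestRisk P X Y ≤ condEnt P X Y - log (1 - δ) :=
  (bestRisk_le_risk hP0 X Y fun x => smooth_mem_Ioo (condProb_mem_Icc hP0 X Y x) hδ).trans
    (risk_smooth_le hP0 hP1 X Y hδ)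

theorem bestRisk_eq_condEnt {P : Ω → ℝ} (hP0 : ∀ ω, 0 ≤ P ω) (hP1 : ∑ ω, P ω = 1)
    (X : Ω → 𝒳) (Y : Ω → Bool) : bestRisk P X Y = condEnt P X Y := by
  refine le_antisymm (le_of_forall_pos_le_add fun ε hε => ?_)
    (le_ciInf fun h => condEnt_le_risk hP0 X Y h.2)
  have hδ : 0 < 1 - exp (-ε) ∧ 1 - exp (-ε) < 1 :=
    ⟨sub_pos.2 (exp_lt_one_iff.2 (neg_lt_zero.2 hε)), sub_lt_self _ (exp_pos _)⟩
  simpa [log_exp] using bestRisk_le_condEnt_sub_log hP0 hP1 X Y hδ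

end BestRisk

theorem domain_selection_gap_ce_general {Ω 𝒵 : Type*} {D : ℕ} {𝒳 : Fin D → Type*}
    [Fintype Ω] [∀ j, Fintype (𝒳 j)] [∀ j, DecidableEq (𝒳 j)]
    (P : Ω → ℝ) (hP0 : ∀ ω, 0 ≤ P ω) (hP1 : ∑ ω, P ω = 1)
    (X : ∀ j : Fin D, Ω → 𝒳 j) (Y : Ω → Bool)
    (W : Ω → ∀ j : Fin D, 𝒳 j) (hW : ∀ ω j, W ω j = X j ω)
    (S : Finset (Fin D)) (hS : S.Nonempty)
    (Z : Ω → 𝒵) (hZ : ∀ j ∈ S, ∃ g : 𝒳 j → 𝒵, ∀ ω, Z ω = g (X j ω))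
    (i : Fin D) :
    (⨅ h : {h : 𝒵 → ℝ // ∀ z, 0 < h z ∧ h z < 1}, risk P Z Y h.1) -
      (⨅ h' : {h' : (∀ j : Fin D, 𝒳 j) → ℝ // ∀ w, 0 < h' w ∧ h' w < 1},
        risk P W Y h'.1) ≥
      mutInfo P (X i) Y - S.inf' hS (fun j => mutInfo P (X j) Y) := by
  obtain ⟨j, hjS, hj⟩ := S.exists_mem_eq_inf' hS (fun j => mutInfo P (X j) Y)
  obtain ⟨g, hg⟩ := hZ j hjS
  have hZ_ge : condEnt P (X j) Y ≤ bestRisk P Z Y :=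
    bestRisk_eq_condEnt hP0 hP1 (X j) Y ▸ bestRisk_le_bestRisk_of_comp hP0 Y g hg
  have hW_le : bestRisk P W Y ≤ condEnt P (X i) Y :=
    bestRisk_eq_condEnt hP0 hP1 (X i) Y ▸
      bestRisk_le_bestRisk_of_comp hP0 Y (fun w => w i) fun ω => (hW ω i).symm
  change bestRisk P Z Y - bestRisk P W Y ≥ _
  rw [hj, mutInfo, mutInfo]
  linarith

/-- domain-selection gap lower bound (cross-entropy form,
Theorem 1 of the paper). With `W` the joint of the family, `Z` a deterministic
function of `X j` for each `j ∈ S`, and `i` the domain maximizing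
`I(X j ; Y)` (optimality assumption), the gap between the best achievable
cross-entropy risks satisfies
`inf_h R(h ∘ Z) − inf_h' R(h' ∘ W) ≥ I(X i ; Y) − min_{j ∈ S} I(X j ; Y)`. -/
theorem domain_selection_gap_ce {Ω 𝒵 : Type*} {D : ℕ} {𝒳 : Fin D → Type*}
    [Fintype Ω] [Nonempty Ω] [∀ j, Fintype (𝒳 j)] [∀ j, DecidableEq (𝒳 j)]
    [Fintype 𝒵] [DecidableEq 𝒵]
    (P : Ω → ℝ) (hP0 : ∀ ω, 0 ≤ P ω) (hP1 : ∑ ω, P ω = 1)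
    (X : ∀ j : Fin D, Ω → 𝒳 j) (Y : Ω → Bool)
    (W : Ω → ∀ j : Fin D, 𝒳 j) (hW : ∀ ω j, W ω j = X j ω)
    (S : Finset (Fin D)) (hS : S.Nonempty)
    (Z : Ω → 𝒵) (hZ : ∀ j ∈ S, ∃ g : 𝒳 j → 𝒵, ∀ ω, Z ω = g (X j ω))
    (i : Fin D)
    (hopt : mutInfo P (X i) Y =
      Finset.univ.sup' ⟨i, Finset.mem_univ i⟩ (fun j => mutInfo P (X j) Y)) :
    (⨅ h : {h : 𝒵 → ℝ // ∀ z, 0 < h z ∧ h z < 1}, risk P Z Y h.1) -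
      (⨅ h' : {h' : (∀ j : Fin D, 𝒳 j) → ℝ // ∀ w, 0 < h' w ∧ h' w < 1},
        risk P W Y h'.1) ≥
      mutInfo P (X i) Y - S.inf' hS (fun j => mutInfo P (X j) Y) :=
  domain_selection_gap_ce_general P hP0 hP1 X Y W hW S hS Z hZ i
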